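/- Let b ∈ L^∞(ℝ^d) be non-negative, let n ∈ ℕ*, (x_n, ν_n) ∈ ℝ^d × S^{d-1}, and 0 < r_n ≤ 1/n. Suppose (1/(2n)) ∫_{-n}^{n} (b ∗ κ_{r_n})(x_n + t ν_n) dt ≤ 2^{-n}, where κ_r = r^{-d}|B_1(0)|^{-1} 𝟙_{B_r(0)}. Then, with the cylinder 𝒞_n = {y : dist(y − x_n, ℝν_n) ≤ (√3/2) r_n, |(y − x_n)·ν_n| ≤ n/2}, one has ∫_{𝒞_n} b(y) dy ≤ 2 |B_1(0)| n r_n^{d-1} 2^{-n}. -/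

import Mathlib

/-!
For `y` in the cylinder, the line `t ↦ xₙ + t • νₙ` passes within distance `(√3/2) rₙ` of `y`,
so for `t` in an interval of length `rₙ` around `⟪y - xₙ, νₙ⟫` (contained in `[-n, n]`) the
point `xₙ + t • νₙ` lies in `B_{rₙ}(y)` and `κ_{rₙ}(xₙ + t • νₙ - y)` takes its maximal value
`(|B₁| rₙ^d)⁻¹`. Integrating first in `t` and then in `y`, Tonelli's theorem gives
`rₙ (|B₁| rₙ^d)⁻¹ ∫_𝒞 b ≤ ∫_{-n}^{n} (b ∗ κ_{rₙ})(xₙ + t • νₙ) dt ≤ 2n 2⁻ⁿ`.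
-/

open MeasureTheory Metric Filter Set

/-- The normalized indicator of the ball of radius `r`. -/
noncomputable def kappa (d : ℕ) (r : ℝ) (x : EuclideanSpace ℝ (Fin d)) : ℝ :=
  if ‖x‖ < r then ((volume (ball (0 : EuclideanSpace ℝ (Fin d)) 1)).toReal * r ^ d)⁻¹ else 0

/-- Convolution `b ∗ κ_r`. -/
noncomputable def convK {d : ℕ} (b : EuclideanSpace ℝ (Fin d) → ℝ) (r : ℝ)
    (x : EuclideanSpace ℝ (Fin d)) : ℝ :=
  ∫ y, b y * kappa d r (x - y)

open scoped InnerProductSpace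

section Cylinder

variable {E : Type*} [NormedAddCommGroup E] [InnerProductSpace ℝ E] {ν : E}

def lineCylinder (x ν : E) (ρ h : ℝ) : Set E :=
  {y | infDist (y - x) (Submodule.span ℝ {ν} : Submodule ℝ E) ≤ ρ ∧ |⟪y - x, ν⟫_ℝ| ≤ h}

lemma isClosed_lineCylinder (x ν : E) (ρ h : ℝ) : IsClosed (lineCylinder x ν ρ h) := by
  rw [lineCylinder, ofPred_and]
  exact (isClosed_le (by fun_prop) continuous_const).inter
    (isClosed_le (by fun_prop) continuous_const)

lemma norm_sub_smul_sq_of_norm_eq_one (hν : ‖ν‖ = 1) (v : E) (a : ℝ) :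
    ‖v - a • ν‖ ^ 2 = ‖v - ⟪v, ν⟫_ℝ • ν‖ ^ 2 + (⟪v, ν⟫_ℝ - a) ^ 2 := by
  have hperp : ⟪v - ⟪v, ν⟫_ℝ • ν, ν⟫_ℝ = 0 := by
    rw [inner_sub_left, real_inner_smul_left, real_inner_self_eq_norm_sq, hν]
    ring
  rw [show v - a • ν = (v - ⟪v, ν⟫_ℝ • ν) + (⟪v, ν⟫_ℝ - a) • ν by module, norm_add_sq_real,
    real_inner_smul_right, hperp, norm_smul, hν, mul_one, Real.norm_eq_abs, sq_abs]
  ring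

lemma norm_sub_inner_smul_le_infDist (hν : ‖ν‖ = 1) (v : E) :
    ‖v - ⟪v, ν⟫_ℝ • ν‖ ≤ infDist v (Submodule.span ℝ {ν} : Set E) := by
  refine (le_infDist ⟨0, Submodule.zero_mem _⟩).2 fun p hp => ?_
  obtain ⟨a, rfl⟩ := Submodule.mem_span_singleton.1 hp
  rw [dist_eq_norm, ← pow_le_pow_iff_left₀ (norm_nonneg _) (norm_nonneg _) two_ne_zero,
    norm_sub_smul_sq_of_norm_eq_one hν v a]
  exact le_add_of_nonneg_right (sq_nonneg _)

lemma norm_add_smul_sub_lt (hν : ‖ν‖ = 1) {x y : E} {r t : ℝ}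
    (hy : infDist (y - x) (Submodule.span ℝ {ν} : Set E) ≤ Real.sqrt 3 / 2 * r)
    (ht : |⟪y - x, ν⟫_ℝ - t| < r / 2) :
    ‖x + t • ν - y‖ < r := by
  have hr : 0 < r := by linarith [abs_nonneg (⟪y - x, ν⟫_ℝ - t)]
  have hw := (norm_sub_inner_smul_le_infDist hν (y - x)).trans hy
  have hw2 : ‖y - x - ⟪y - x, ν⟫_ℝ • ν‖ ^ 2 ≤ 3 / 4 * r ^ 2 := by
    calc _ ≤ (Real.sqrt 3 / 2 * r) ^ 2 := pow_le_pow_left₀ (norm_nonneg _) hw 2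
      _ = 3 / 4 * r ^ 2 := by rw [mul_pow, div_pow, Real.sq_sqrt zero_le_three]; ring
  have ht2 : (⟪y - x, ν⟫_ℝ - t) ^ 2 < r ^ 2 / 4 := by
    rw [← sq_abs]
    nlinarith [abs_nonneg (⟪y - x, ν⟫_ℝ - t)]
  rw [show x + t • ν - y = -(y - x - t • ν) by abel, norm_neg,
    ← pow_lt_pow_iff_left₀ (norm_nonneg _) hr.le two_ne_zero,
    norm_sub_smul_sq_of_norm_eq_one hν]
  linarith

end Cylinder

section Kernel

variable {d : ℕ} {r : ℝ}

lemma kappa_nonneg (d : ℕ) (r : ℝ) (x : EuclideanSpace ℝ (Fin d)) : 0 ≤ kappa d r x := by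
  unfold kappa
  split_ifs with h
  · have : 0 < r := (norm_nonneg x).trans_lt h
    positivity
  · exact le_rfl

lemma measurable_kappa (d : ℕ) (r : ℝ) : Measurable (kappa d r) := by
  unfold kappa
  exact Measurable.ite (isOpen_lt continuous_norm continuous_const).measurableSet
    measurable_const measurable_const

lemma kappa_eq_indicator (d : ℕ) (r : ℝ) :
    kappa d r = (ball 0 r).indicator
      fun _ => ((volume (ball (0 : EuclideanSpace ℝ (Fin d)) 1)).toReal * r ^ d)⁻¹ := by
  ext x
  simp [kappa, indicator]

lemma integrable_kappa : Integrable (kappa d r) := by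
  rw [kappa_eq_indicator]
  exact (integrableOn_const measure_ball_lt_top.ne).integrable_indicator measurableSet_ball

lemma integral_kappa (hr : 0 < r) : ∫ x, kappa d r x = 1 := by
  have hV : 0 < (volume (ball (0 : EuclideanSpace ℝ (Fin d)) 1)).toReal :=
    ENNReal.toReal_pos (measure_ball_pos volume 0 one_pos).ne' measure_ball_lt_top.ne
  rw [kappa_eq_indicator, integral_indicator measurableSet_ball, setIntegral_const,
    measureReal_def, Measure.addHaar_ball_of_pos _ _ hr, finrank_euclideanSpace_fin,
    ENNReal.toReal_mul, ENNReal.toReal_ofReal (by positivity), smul_eq_mul]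
  field_simp

end Kernel

section Convolution

variable {d : ℕ} {r : ℝ} {b : EuclideanSpace ℝ (Fin d) → ℝ}

lemma integrable_mul_kappa_sub (hb : MemLp b ⊤ volume) (z : EuclideanSpace ℝ (Fin d)) :
    Integrable fun y => b y * kappa d r (z - y) :=
  (integrable_kappa.comp_sub_left z).mul_of_top_right hb

lemma convK_nonneg (hb : ∀ y, 0 ≤ b y) (z : EuclideanSpace ℝ (Fin d)) : 0 ≤ convK b r z :=
  integral_nonneg fun y => mul_nonneg (hb y) (kappa_nonneg d r _)

lemma norm_convK_le (hr : 0 < r) (hb : MemLp b ⊤ volume) (z : EuclideanSpace ℝ (Fin d)) :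
    ‖convK b r z‖ ≤ (eLpNorm b ⊤ volume).toReal := by
  set M := (eLpNorm b ⊤ volume).toReal
  have hbM : ∀ᵐ y, ‖b y‖ ≤ M := by
    filter_upwards [ae_le_eLpNormEssSup (f := b) (μ := volume)] with y hy
    have hfin : eLpNormEssSup b volume ≠ ⊤ := by
      simpa [eLpNorm_exponent_top] using hb.eLpNorm_ne_top
    simpa [M, eLpNorm_exponent_top] using ENNReal.toReal_mono hfin hy
  calc ‖convK b r z‖ ≤ ∫ y, M * kappa d r (z - y) := by
        refine norm_integral_le_of_norm_le ((integrable_kappa.comp_sub_left z).const_mul M) ?_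
        filter_upwards [hbM] with y hy
        rw [norm_mul, Real.norm_of_nonneg (kappa_nonneg d r _)]
        exact mul_le_mul_of_nonneg_right hy (kappa_nonneg d r _)
    _ = M := by
        rw [integral_const_mul, integral_sub_left_eq_self (kappa d r), integral_kappa hr, mul_one]

lemma measurable_convK (hb : AEMeasurable b volume) (r : ℝ) : Measurable (convK b r) := by
  have hmk : convK b r = convK (hb.mk b) r := funext fun z =>
    integral_congr_ae (by filter_upwards [hb.ae_eq_mk] with y hy; rw [hy])
  rw [hmk]
  exact ((hb.measurable_mk.comp measurable_snd).mul ((measurable_kappa d r).comp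
    (measurable_fst.sub measurable_snd))).stronglyMeasurable.integral_prod_right'.measurable

lemma lintegral_convK_line (hb : MemLp b ⊤ volume) (hbnn : ∀ y, 0 ≤ b y)
    (x ν : EuclideanSpace ℝ (Fin d)) (I : Set ℝ) :
    ∫⁻ t in I, ENNReal.ofReal (convK b r (x + t • ν)) =
      ∫⁻ y, ENNReal.ofReal (b y) * ∫⁻ t in I, ENNReal.ofReal (kappa d r (x + t • ν - y)) := by
  have hofReal : ∀ z, ENNReal.ofReal (convK b r z) =
      ∫⁻ y, ENNReal.ofReal (b y) * ENNReal.ofReal (kappa d r (z - y)) := fun z => by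
    rw [convK, ofReal_integral_eq_lintegral_ofReal (integrable_mul_kappa_sub hb z)
      (ae_of_all _ fun y => mul_nonneg (hbnn y) (kappa_nonneg d r _))]
    simp_rw [ENNReal.ofReal_mul (hbnn _)]
  simp_rw [hofReal]
  rw [lintegral_lintegral_swap]
  · simp_rw [lintegral_const_mul' _ _ ENNReal.ofReal_ne_top]
  · exact hb.1.aemeasurable.ennreal_ofReal.comp_snd.mul (ENNReal.measurable_ofReal.comp
      ((measurable_kappa d r).comp ((measurable_const.add (measurable_fst.smul_const ν)).sub
        measurable_snd))).aemeasurable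

end Convolution

section LineAverage

variable {d : ℕ} {r h L : ℝ} {b : EuclideanSpace ℝ (Fin d) → ℝ} {x ν : EuclideanSpace ℝ (Fin d)}

lemma le_lintegral_kappa_line (hν : ‖ν‖ = 1) {y : EuclideanSpace ℝ (Fin d)}
    (hy : y ∈ lineCylinder x ν (Real.sqrt 3 / 2 * r) h) (hL : h + r / 2 ≤ L) :
    ENNReal.ofReal ((volume (ball (0 : EuclideanSpace ℝ (Fin d)) 1)).toReal * r ^ d)⁻¹ *
        ENNReal.ofReal r ≤
      ∫⁻ t in Ioc (-L) L, ENNReal.ofReal (kappa d r (x + t • ν - y)) := by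
  set s := ⟪y - x, ν⟫_ℝ
  obtain ⟨hy_near, hy_short⟩ := hy
  obtain ⟨hs_lower, hs_upper⟩ := abs_le.1 hy_short
  have hsub : Ioo (s - r / 2) (s + r / 2) ⊆ Ioc (-L) L := fun t ht =>
    ⟨by linarith [ht.1], by linarith [ht.2]⟩
  calc _ = ∫⁻ _ in Ioo (s - r / 2) (s + r / 2),
        ENNReal.ofReal ((volume (ball (0 : EuclideanSpace ℝ (Fin d)) 1)).toReal * r ^ d)⁻¹ := by
        rw [setLIntegral_const, Real.volume_Ioo]
        ring_nf
    _ = ∫⁻ t in Ioo (s - r / 2) (s + r / 2), ENNReal.ofReal (kappa d r (x + t • ν - y)) := by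
        refine setLIntegral_congr_fun measurableSet_Ioo fun t ht => ?_
        have hts : |s - t| < r / 2 := abs_sub_lt_iff.2 ⟨by linarith [ht.1], by linarith [ht.2]⟩
        rw [kappa, if_pos (norm_add_smul_sub_lt hν hy_near hts)]
    _ ≤ _ := lintegral_mono_set hsub

lemma lintegral_lineCylinder_mul_le (hb : MemLp b ⊤ volume) (hbnn : ∀ y, 0 ≤ b y)
    (hν : ‖ν‖ = 1) (hL : h + r / 2 ≤ L) :
    (∫⁻ y in lineCylinder x ν (Real.sqrt 3 / 2 * r) h, ENNReal.ofReal (b y)) *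
        (ENNReal.ofReal ((volume (ball (0 : EuclideanSpace ℝ (Fin d)) 1)).toReal * r ^ d)⁻¹ *
          ENNReal.ofReal r) ≤
      ∫⁻ t in Ioc (-L) L, ENNReal.ofReal (convK b r (x + t • ν)) := by
  rw [lintegral_convK_line hb hbnn, ← lintegral_mul_const' _ _ (by finiteness)]
  calc _ ≤ ∫⁻ y in lineCylinder x ν (Real.sqrt 3 / 2 * r) h, ENNReal.ofReal (b y) *
          ∫⁻ t in Ioc (-L) L, ENNReal.ofReal (kappa d r (x + t • ν - y)) :=
        setLIntegral_mono' (isClosed_lineCylinder _ _ _ _).measurableSet fun y hy =>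
          mul_le_mul_right (le_lintegral_kappa_line hν hy hL) _
    _ ≤ _ := setLIntegral_le_lintegral _ _

lemma mul_setIntegral_lineCylinder_le (hb : MemLp b ⊤ volume) (hbnn : ∀ y, 0 ≤ b y)
    (hν : ‖ν‖ = 1) (hr : 0 < r) (hL : h + r / 2 ≤ L) :
    ((volume (ball (0 : EuclideanSpace ℝ (Fin d)) 1)).toReal * r ^ d)⁻¹ * r *
        ∫ y in lineCylinder x ν (Real.sqrt 3 / 2 * r) h, b y ≤
      ∫ t in Ioc (-L) L, convK b r (x + t • ν) := by
  have hint : IntegrableOn (fun t => convK b r (x + t • ν)) (Ioc (-L) L) :=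
    Measure.integrableOn_of_bounded measure_Ioc_lt_top.ne
      ((measurable_convK hb.1.aemeasurable r).comp (by fun_prop)).aestronglyMeasurable
      (ae_of_all _ fun t => norm_convK_le hr hb _)
  rw [integral_eq_lintegral_of_nonneg_ae (ae_of_all _ hbnn) hb.1.restrict, mul_comm,
    ← ENNReal.toReal_ofReal (mul_nonneg (inv_nonneg.2 (by positivity)) hr.le),
    ← ENNReal.toReal_mul, ENNReal.ofReal_mul (inv_nonneg.2 (by positivity))]
  refine ENNReal.toReal_le_of_le_ofReal (setIntegral_nonneg measurableSet_Ioc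
    fun t _ => convK_nonneg hbnn _) ?_
  rw [ofReal_integral_eq_lintegral_ofReal hint (ae_of_all _ fun t => convK_nonneg hbnn _)]
  exact lintegral_lineCylinder_mul_le hb hbnn hν hL

end LineAverage

theorem stmt4_general {d : ℕ} (b : EuclideanSpace ℝ (Fin d) → ℝ)
    (hbd : MemLp b ⊤ volume) (hbnn : ∀ x, 0 ≤ b x)
    (n : ℕ) (xn νn : EuclideanSpace ℝ (Fin d)) (hν : ‖νn‖ = 1)
    (rn : ℝ) (hr0 : 0 < rn) (hr1 : rn ≤ 1 / n)
    (havg : (2 * (n : ℝ))⁻¹ * ∫ t in (-(n : ℝ))..(n : ℝ),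
        convK b rn (xn + t • νn) ≤ (1 / 2 : ℝ) ^ n) :
    ∫ y in {y : EuclideanSpace ℝ (Fin d) |
        Metric.infDist (y - xn) (Submodule.span ℝ {νn} : Submodule ℝ _) ≤
          Real.sqrt 3 / 2 * rn ∧ |(inner ℝ (y - xn) νn : ℝ)| ≤ (n : ℝ) / 2},
      b y ≤
    2 * (volume (ball (0 : EuclideanSpace ℝ (Fin d)) 1)).toReal * n * rn ^ (d - 1)
      * (1 / 2 : ℝ) ^ n := by
  set V := (volume (ball (0 : EuclideanSpace ℝ (Fin d)) 1)).toReal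
  have hV : 0 < V :=
    ENNReal.toReal_pos (measure_ball_pos volume 0 one_pos).ne' measure_ball_lt_top.ne
  have hn : (1 : ℝ) ≤ n := by
    rcases Nat.eq_zero_or_pos n with rfl | hn
    · norm_num at hr1 -- `1 / 0 = 0` in `ℝ`
      linarith
    · exact_mod_cast hn
  have hd : d ≠ 0 := by
    rintro rfl
    simp [Subsingleton.elim νn 0] at hν
  have hline : ∫ t in Ioc (-(n : ℝ)) n, convK b rn (xn + t • νn) ≤ 2 * n * (1 / 2 : ℝ) ^ n := by
    rwa [intervalIntegral.integral_of_le (by linarith), inv_mul_le_iff₀ (by positivity)] at havg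
  have hL : (n : ℝ) / 2 + rn / 2 ≤ n := by
    linarith [hr1.trans (div_le_one_of_le₀ hn (by positivity))]
  have hcyl := mul_setIntegral_lineCylinder_le hbd hbnn hν hr0 (x := xn) hL
  have hscale : (V * rn ^ d)⁻¹ * rn = (V * rn ^ (d - 1))⁻¹ := by
    rw [← Nat.sub_add_cancel (Nat.one_le_iff_ne_zero.2 hd), pow_succ, Nat.add_sub_cancel]
    field_simp
  rw [hscale, inv_mul_le_iff₀ (by positivity)] at hcyl
  calc _ ≤ V * rn ^ (d - 1) * ∫ t in Ioc (-(n : ℝ)) n, convK b rn (xn + t • νn) := hcyl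
    _ ≤ V * rn ^ (d - 1) * (2 * n * (1 / 2 : ℝ) ^ n) := by gcongr
    _ = _ := by ring

theorem stmt4 {d : ℕ} (b : EuclideanSpace ℝ (Fin d) → ℝ)
    (hbmeas : Measurable b) (hbd : MemLp b ⊤ volume) (hbnn : ∀ x, 0 ≤ b x)
    (n : ℕ) (hn : 1 ≤ n) (xn νn : EuclideanSpace ℝ (Fin d)) (hν : ‖νn‖ = 1)
    (rn : ℝ) (hr0 : 0 < rn) (hr1 : rn ≤ 1 / n)
    (havg : (2 * (n : ℝ))⁻¹ * ∫ t in (-(n : ℝ))..(n : ℝ),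
        convK b rn (xn + t • νn) ≤ (1 / 2 : ℝ) ^ n) :
    ∫ y in {y : EuclideanSpace ℝ (Fin d) |
        Metric.infDist (y - xn) (Submodule.span ℝ {νn} : Submodule ℝ _) ≤
          Real.sqrt 3 / 2 * rn ∧ |(inner ℝ (y - xn) νn : ℝ)| ≤ (n : ℝ) / 2},
      b y ≤
    2 * (volume (ball (0 : EuclideanSpace ℝ (Fin d)) 1)).toReal * n * rn ^ (d - 1)
      * (1 / 2 : ℝ) ^ n :=
  stmt4_general b hbd hbnn n xn νn hν rn hr0 hr1 havg
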